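/- arXiv:2106.10376 — 2 statements merged into one kernel-verified Lean document; each statement's English description precedes it below -/
import Mathlib

section
/- Let G be a finite connected simple graph and let H₀ be a minimal 1-densest subgraph of G with H₀ ≠ G. Then for every fair pmf μ* on the spanning trees of G and every edge e of H₀, the edge probability satisfies η_{μ*}(e) = (|V(H₀)|−1)/|E(H₀)| = θ(H₀)^{−1}. -/
/-!
Mixing a fair pmf `μ` with a point mass on a spanning tree `T` and differentiating the variance
at `0` shows that every tree in the support of `μ` is a minimum spanning tree for the weights
`η = η_μ`. Let `t` be the smallest edge probability and `L` the set of edges where it is attained.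
By the cycle property of minimum spanning trees, every support tree `T` connects the endpoints of
each edge of `L` through `L ∩ T`; splitting along the components of this forest, each of which
induces a subgraph of density at most `θ = θ(H₀)`, gives `|L| ≤ θ |L ∩ T|`. Averaging over `T`
yields `t |L| = ∑_{e ∈ L} η(e) = 𝔼 |L ∩ T| ≥ |L| / θ`, so `η ≥ θ⁻¹` on all of `G`. On the other
hand a spanning tree has at most `|V(H₀)| - 1` edges inside `H₀`, so `∑_{e ∈ E(H₀)} η(e) ≤
|V(H₀)| - 1 = θ⁻¹ |E(H₀)|`, which forces `η = θ⁻¹` on every edge of `H₀`.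
-/

open scoped Classical

noncomputable section

variable {V : Type*} [Fintype V] [DecidableEq V]

/-- `T` is (the edge set of) a spanning tree of the vertex-induced subgraph of `G`
on the vertex set `S`: its edges are edges of `G` with both endpoints in `S`,
it is acyclic, and every two vertices of `S` are joined by a path using edges of `T`. -/
def IsSpanningTreeOn (G : SimpleGraph V) (S : Finset V) (T : Finset (Sym2 V)) : Prop :=
  (↑T : Set (Sym2 V)) ⊆ G.edgeSet ∧ (∀ e ∈ T, ∀ v ∈ e, v ∈ S) ∧
    (SimpleGraph.fromEdgeSet (↑T : Set (Sym2 V))).IsAcyclic ∧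
    ∀ u ∈ S, ∀ w ∈ S, (SimpleGraph.fromEdgeSet (↑T : Set (Sym2 V))).Reachable u w

/-- A probability mass function on the spanning trees of the induced subgraph of `G` on `S`. -/
structure TreePMFOn (G : SimpleGraph V) (S : Finset V) where
  toFun : Finset (Sym2 V) → ℝ
  nonneg : ∀ T, 0 ≤ toFun T
  supp : ∀ T, toFun T ≠ 0 → IsSpanningTreeOn G S T
  sum_one : ∑ T : Finset (Sym2 V), toFun T = 1

/-- Edge probability `η_μ(e)`. -/
def edgeProbOn {G : SimpleGraph V} {S : Finset V} (μ : TreePMFOn G S) (e : Sym2 V) : ℝ :=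
  ∑ T : Finset (Sym2 V), if e ∈ T then μ.toFun T else 0

/-- Edges of `G` with both endpoints in `S`. -/
def inducedEdges (G : SimpleGraph V) (S : Finset V) : Finset (Sym2 V) :=
  G.edgeFinset.filter fun e => ∀ v ∈ e, v ∈ S

/-- Variance of the edge probabilities of `μ` over the edges within `S`. -/
def edgeVarOn {G : SimpleGraph V} {S : Finset V} (μ : TreePMFOn G S) : ℝ :=
  (∑ e ∈ inducedEdges G S, (edgeProbOn μ e) ^ 2) / ((inducedEdges G S).card : ℝ) -
    ((∑ e ∈ inducedEdges G S, edgeProbOn μ e) / ((inducedEdges G S).card : ℝ)) ^ 2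

/-- A pmf is fair if it minimizes the variance of the edge probabilities. -/
def IsFairOn {G : SimpleGraph V} {S : Finset V} (μ : TreePMFOn G S) : Prop :=
  ∀ ν : TreePMFOn G S, edgeVarOn μ ≤ edgeVarOn ν

/-- A fair tree: a spanning tree in the support of some fair pmf. -/
def IsFairTreeOn (G : SimpleGraph V) (S : Finset V) (T : Finset (Sym2 V)) : Prop :=
  ∃ μ : TreePMFOn G S, IsFairOn μ ∧ μ.toFun T ≠ 0

/-- The 1-density `θ(H) = |E(H)|/(|V(H)|-1)` of the induced subgraph on `S`. -/
def density (G : SimpleGraph V) (S : Finset V) : ℝ :=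
  ((inducedEdges G S).card : ℝ) / ((S.card : ℝ) - 1)

/-- `S` induces a member of `H(G)`: connected, vertex-induced, with at least one edge. -/
def InH (G : SimpleGraph V) (S : Finset V) : Prop :=
  (inducedEdges G S).Nonempty ∧ (G.induce (↑S : Set V)).Connected

/-- `S` induces a 1-densest subgraph of `G`. -/
def IsDensest (G : SimpleGraph V) (S : Finset V) : Prop :=
  InH G S ∧ ∀ S' : Finset V, InH G S' → density G S' ≤ density G S

/-- `S` induces a minimal 1-densest subgraph of `G`. -/
def IsMinimalDensest (G : SimpleGraph V) (S : Finset V) : Prop :=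
  IsDensest G S ∧ ∀ S' : Finset V, S' ⊆ S → S' ≠ S → ¬ IsDensest G S'

/-- The induced subgraph on `S` is homogeneous: some pmf on its spanning trees
has constant edge probabilities. -/
def IsHomogeneousOn (G : SimpleGraph V) (S : Finset V) : Prop :=
  ∃ μ : TreePMFOn G S, ∃ c : ℝ, ∀ e ∈ inducedEdges G S, edgeProbOn μ e = c

/-- The induced subgraph on `S` has the strict 1-density property. -/
def StrictDensityOn (G : SimpleGraph V) (S : Finset V) : Prop :=
  ∀ S' : Finset V, S' ⊆ S → InH G S' → S' ≠ S → density G S' < density G S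

open SimpleGraph Finset

namespace SimpleGraph

variable {G D : SimpleGraph V} {F T : Finset (Sym2 V)}

omit [Fintype V] [DecidableEq V] in
lemma Walk.mem_of_mem_edges_fromEdgeSet {s : Set (Sym2 V)} {u v : V}
    (p : (fromEdgeSet s).Walk u v) {e : Sym2 V} (he : e ∈ p.edges) : e ∈ s :=
  ((edgeSet_fromEdgeSet s ▸ p.edges_subset_edgeSet he) : e ∈ s \ Sym2.diagSet).1

omit [Fintype V] [DecidableEq V] in
lemma edgeFinset_fromEdgeSet_of_subset [Fintype (fromEdgeSet (F : Set (Sym2 V))).edgeSet]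
    (h : (F : Set (Sym2 V)) ⊆ G.edgeSet) :
    (fromEdgeSet (F : Set (Sym2 V))).edgeFinset = F := by
  ext e
  simp only [mem_edgeFinset, edgeSet_fromEdgeSet, Set.mem_sdiff, mem_coe]
  exact ⟨And.left, fun he => ⟨he, G.not_isDiag_of_mem_edgeSet (h he)⟩⟩

omit [DecidableEq V] in
lemma IsAcyclic.card_edgeFinset_add_one_le [Nonempty V] [Fintype D.edgeSet] (h : D.IsAcyclic) :
    #D.edgeFinset + 1 ≤ Fintype.card V := by
  obtain ⟨F, hDF, -, hF⟩ := connected_top.exists_isTree_le_of_le_of_isAcyclic le_top h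
  rw [← hF.card_edgeFinset]
  exact Nat.add_le_add_right (card_le_card (edgeFinset_mono hDF)) 1

omit [DecidableEq V] in
lemma IsAcyclic.isTree_of_card_edgeFinset [Nonempty V] [Fintype D.edgeSet] (h : D.IsAcyclic)
    (hcard : #D.edgeFinset + 1 = Fintype.card V) : D.IsTree := by
  obtain ⟨F, hDF, -, hF⟩ := connected_top.exists_isTree_le_of_le_of_isAcyclic le_top h
  have : D.edgeFinset = F.edgeFinset :=
    eq_of_subset_of_card_le (edgeFinset_mono hDF) (by have := hF.card_edgeFinset; omega)
  rwa [edgeFinset_inj.mp this]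

omit [Fintype V] in
lemma not_reachable_erase_of_mem_edges (hT : (fromEdgeSet (T : Set (Sym2 V))).IsAcyclic)
    {x y : V} (p : (fromEdgeSet (T : Set (Sym2 V))).Path x y) {f : Sym2 V} (hf : f ∈ p.1.edges) :
    ¬ (fromEdgeSet (T.erase f : Set (Sym2 V))).Reachable x y := by
  rintro ⟨q⟩
  have hle : fromEdgeSet (T.erase f : Set (Sym2 V)) ≤ fromEdgeSet T :=
    fromEdgeSet_mono (coe_subset.mpr (erase_subset f T))
  have hq : (q.toPath.1.mapLe hle).IsPath := q.toPath.2.mapLe hle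
  have hpq : p = ⟨_, hq⟩ := (hT.subsingleton_path x y).elim _ _
  rw [hpq, Walk.edges_mapLe_eq_edges] at hf
  exact (mem_erase.mp (q.toPath.1.mem_of_mem_edges_fromEdgeSet hf)).1 rfl

omit [Fintype V] in
lemma mk_notMem_erase_of_mem_edges (hT : (fromEdgeSet (T : Set (Sym2 V))).IsAcyclic)
    {x y : V} (hxy : x ≠ y) (p : (fromEdgeSet (T : Set (Sym2 V))).Path x y) {f : Sym2 V}
    (hf : f ∈ p.1.edges) : s(x, y) ∉ T.erase f := fun h =>
  not_reachable_erase_of_mem_edges hT p hf (Adj.reachable ((fromEdgeSet_adj _).mpr ⟨h, hxy⟩))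

end SimpleGraph

section SpanningTree

variable {G : SimpleGraph V} {T : Finset (Sym2 V)}

omit [DecidableEq V] in
lemma IsSpanningTreeOn.subset_edgeFinset {S : Finset V} (h : IsSpanningTreeOn G S T) :
    T ⊆ G.edgeFinset :=
  fun _ he => mem_edgeFinset.mpr (h.1 he)

omit [DecidableEq V] in
lemma isSpanningTreeOn_univ_iff [Nonempty V] :
    IsSpanningTreeOn G univ T ↔
      (T : Set (Sym2 V)) ⊆ G.edgeSet ∧ (fromEdgeSet (T : Set (Sym2 V))).IsTree :=
  ⟨fun ⟨hG, _, hacyc, hreach⟩ =>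
      ⟨hG, ⟨⟨fun u v => hreach u (mem_univ u) v (mem_univ v)⟩, hacyc⟩⟩,
    fun ⟨hG, hT⟩ =>
      ⟨hG, fun _ _ v _ => mem_univ v, hT.isAcyclic, fun u _ v _ => hT.connected.preconnected u v⟩⟩

lemma IsSpanningTreeOn.card_add_one [Nonempty V] (h : IsSpanningTreeOn G univ T) :
    #T + 1 = Fintype.card V := by
  obtain ⟨hG, hT⟩ := isSpanningTreeOn_univ_iff.mp h
  rw [← edgeFinset_fromEdgeSet_of_subset hG]
  exact hT.card_edgeFinset

lemma IsSpanningTreeOn.exchange [Nonempty V] (hT : IsSpanningTreeOn G univ T) {x y : V}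
    (hxy : G.Adj x y) (p : (fromEdgeSet (T : Set (Sym2 V))).Path x y) {f : Sym2 V}
    (hf : f ∈ p.1.edges) : IsSpanningTreeOn G univ (insert s(x, y) (T.erase f)) := by
  obtain ⟨hTG, hTtree⟩ := isSpanningTreeOn_univ_iff.mp hT
  have hfT : f ∈ T := p.1.mem_of_mem_edges_fromEdgeSet hf
  have hnr := not_reachable_erase_of_mem_edges hTtree.isAcyclic p hf
  have hxyT := mk_notMem_erase_of_mem_edges hTtree.isAcyclic hxy.ne p hf
  have hsub : ((insert s(x, y) (T.erase f) : Finset (Sym2 V)) : Set (Sym2 V)) ⊆ G.edgeSet := by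
    rw [coe_insert, Set.insert_subset_iff]
    exact ⟨hxy, (coe_subset.mpr (erase_subset f T)).trans hTG⟩
  have hacyc : (fromEdgeSet (T.erase f : Set (Sym2 V))).IsAcyclic :=
    hTtree.isAcyclic.anti (fromEdgeSet_mono (coe_subset.mpr (erase_subset f T)))
  refine isSpanningTreeOn_univ_iff.mpr ⟨hsub, IsAcyclic.isTree_of_card_edgeFinset ?_ ?_⟩
  · rw [coe_insert, Set.insert_eq, fromEdgeSet_union, sup_comm]
    exact hacyc.sup_edge_of_not_reachable hnr
  · rw [edgeFinset_fromEdgeSet_of_subset hsub, card_insert_of_notMem hxyT,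
      card_erase_add_one hfT, hT.card_add_one]

end SpanningTree

def IsMinWeightSpanningTree (G : SimpleGraph V) (w : Sym2 V → ℝ) (T : Finset (Sym2 V)) : Prop :=
  IsSpanningTreeOn G univ T ∧ ∀ T', IsSpanningTreeOn G univ T' → ∑ e ∈ T, w e ≤ ∑ e ∈ T', w e

namespace IsMinWeightSpanningTree

variable {G : SimpleGraph V} {w : Sym2 V → ℝ} {T : Finset (Sym2 V)} [Nonempty V]

lemma weight_le_of_mem_edges (hT : IsMinWeightSpanningTree G w T) {x y : V} (hxy : G.Adj x y)
    (p : (fromEdgeSet (T : Set (Sym2 V))).Path x y) {f : Sym2 V} (hf : f ∈ p.1.edges) :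
    w f ≤ w s(x, y) := by
  have hfT : f ∈ T := p.1.mem_of_mem_edges_fromEdgeSet hf
  have hxyT := mk_notMem_erase_of_mem_edges hT.1.2.2.1 hxy.ne p hf
  have := hT.2 _ (hT.1.exchange hxy p hf)
  rw [sum_insert hxyT, sum_erase_eq_sub hfT] at this
  linarith

lemma reachable_of_mem_filter_eq (hT : IsMinWeightSpanningTree G w T) {t : ℝ}
    (ht : ∀ e ∈ G.edgeFinset, t ≤ w e) {x y : V} (hxy : s(x, y) ∈ {e ∈ G.edgeFinset | w e = t}) :
    (fromEdgeSet ({e ∈ G.edgeFinset | w e = t} ∩ T : Finset (Sym2 V))).Reachable x y := by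
  obtain ⟨hxyG, hwxy⟩ := mem_filter.mp hxy
  obtain ⟨q⟩ := hT.1.2.2.2 x (mem_univ x) y (mem_univ y)
  refine ⟨q.toPath.1.transfer _ fun f hf => ?_⟩
  have hfT : f ∈ T := q.toPath.1.mem_of_mem_edges_fromEdgeSet hf
  have hfG : f ∈ G.edgeFinset := hT.1.subset_edgeFinset hfT
  have hwf := hT.weight_le_of_mem_edges (mem_edgeFinset.mp hxyG) q.toPath hf
  rw [edgeSet_fromEdgeSet, coe_inter, coe_filter]
  exact ⟨⟨⟨hfG, le_antisymm (hwxy ▸ hwf) (ht f hfG)⟩, hfT⟩,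
    not_isDiag_of_mem_edgeSet _ (q.toPath.1.edges_subset_edgeSet hf)⟩

end IsMinWeightSpanningTree

namespace TreePMFOn

variable {G : SimpleGraph V} {S : Finset V} (μ : TreePMFOn G S)

def expect (φ : Finset (Sym2 V) → ℝ) : ℝ :=
  ∑ T, μ.toFun T * φ T

lemma sum_mul_edgeProbOn (g : Sym2 V → ℝ) (L : Finset (Sym2 V)) :
    ∑ e ∈ L, g e * edgeProbOn μ e = μ.expect fun T => ∑ e ∈ L ∩ T, g e := by
  simp_rw [edgeProbOn, expect, mul_sum, mul_ite, mul_zero]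
  rw [sum_comm]
  refine sum_congr rfl fun T _ => ?_
  rw [sum_ite_mem]
  exact sum_congr rfl fun e _ => mul_comm _ _

lemma sum_edgeProbOn (L : Finset (Sym2 V)) :
    ∑ e ∈ L, edgeProbOn μ e = μ.expect fun T => (#(L ∩ T) : ℝ) := by
  simpa using μ.sum_mul_edgeProbOn 1 L

def mixDirac {T₀ : Finset (Sym2 V)} (hT₀ : IsSpanningTreeOn G S T₀) {t : ℝ} (ht₀ : 0 ≤ t)
    (ht₁ : t ≤ 1) : TreePMFOn G S where
  toFun T := (1 - t) * μ.toFun T + if T = T₀ then t else 0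
  nonneg T :=
    add_nonneg (mul_nonneg (sub_nonneg.mpr ht₁) (μ.nonneg T)) (by split_ifs <;> simp [ht₀])
  supp T h := by
    by_cases hT : T = T₀
    · exact hT ▸ hT₀
    · exact μ.supp T fun h0 => h (by simp [h0, hT])
  sum_one := by simp [sum_add_distrib, ← mul_sum, μ.sum_one]

lemma edgeProbOn_mixDirac {T₀ : Finset (Sym2 V)} (hT₀ : IsSpanningTreeOn G S T₀) {t : ℝ}
    (ht₀ : 0 ≤ t) (ht₁ : t ≤ 1) (e : Sym2 V) :
    edgeProbOn (μ.mixDirac hT₀ ht₀ ht₁) e = (1 - t) * edgeProbOn μ e + if e ∈ T₀ then t else 0 := by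
  simp only [edgeProbOn, mixDirac, ite_add_zero, sum_add_distrib, mul_sum, mul_ite, mul_zero]
  congr 1
  rw [sum_eq_single T₀ (fun T _ hT => by simp [hT]) (by simp)]
  simp

variable {μ}

omit [DecidableEq V]

lemma le_expect {a : ℝ} {φ : Finset (Sym2 V) → ℝ} (h : ∀ T, μ.toFun T ≠ 0 → a ≤ φ T) :
    a ≤ μ.expect φ := by
  calc a = ∑ T, μ.toFun T * a := by rw [← sum_mul, μ.sum_one, one_mul]
    _ ≤ μ.expect φ := sum_le_sum fun T _ => by
      by_cases hT : μ.toFun T = 0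
      · simp [hT]
      · exact mul_le_mul_of_nonneg_left (h T hT) (μ.nonneg T)

lemma expect_le {a : ℝ} {φ : Finset (Sym2 V) → ℝ} (h : ∀ T, μ.toFun T ≠ 0 → φ T ≤ a) :
    μ.expect φ ≤ a := by
  have := le_expect (μ := μ) (a := -a) (φ := fun T => -φ T) fun T hT => neg_le_neg (h T hT)
  simp only [expect, mul_neg, sum_neg_distrib] at this
  exact neg_le_neg_iff.mp this

lemma eq_of_expect_le {a : ℝ} {φ : Finset (Sym2 V) → ℝ} (h : ∀ T, μ.toFun T ≠ 0 → a ≤ φ T)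
    (hφ : μ.expect φ ≤ a) {T : Finset (Sym2 V)} (hT : μ.toFun T ≠ 0) : φ T = a := by
  have hnonneg : ∀ T ∈ univ, 0 ≤ μ.toFun T * (φ T - a) := fun T _ => by
    by_cases hT : μ.toFun T = 0
    · simp [hT]
    · exact mul_nonneg (μ.nonneg T) (sub_nonneg.mpr (h T hT))
  have hsum : ∑ T, μ.toFun T * (φ T - a) = 0 := by
    refine le_antisymm ?_ (sum_nonneg hnonneg)
    simp only [mul_sub, sum_sub_distrib, ← sum_mul, μ.sum_one, one_mul]
    exact sub_nonpos.mpr hφ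
  have := (sum_eq_zero_iff_of_nonneg hnonneg).mp hsum T (mem_univ T)
  exact sub_eq_zero.mp ((mul_eq_zero.mp this).resolve_left hT)

end TreePMFOn

open Filter Topology in
lemma nonneg_of_forall_mul_add_sq_nonneg {a b : ℝ}
    (h : ∀ t : ℝ, 0 < t → t ≤ 1 → 0 ≤ t * a + t ^ 2 * b) : 0 ≤ a := by
  have hlim : Tendsto (fun t : ℝ => a + t * b) (𝓝[>] 0) (𝓝 a) := by
    refine tendsto_nhdsWithin_of_tendsto_nhds ?_
    have : Continuous fun t : ℝ => a + t * b := by fun_prop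
    simpa using this.tendsto 0
  refine ge_of_tendsto hlim ?_
  filter_upwards [Ioo_mem_nhdsGT one_pos] with t ht
  have := h t ht.1 ht.2.le
  nlinarith [ht.1]

lemma inducedEdges_univ (G : SimpleGraph V) : inducedEdges G univ = G.edgeFinset := by
  simp [inducedEdges]

section Fair

variable {G : SimpleGraph V} [Nonempty V] {μ : TreePMFOn G univ}

lemma TreePMFOn.sum_edgeProbOn_edgeFinset (μ : TreePMFOn G univ) :
    ∑ e ∈ G.edgeFinset, edgeProbOn μ e = Fintype.card V - 1 := by
  have hcard : ∀ T, μ.toFun T ≠ 0 → (#(G.edgeFinset ∩ T) : ℝ) = Fintype.card V - 1 := by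
    intro T hT
    rw [inter_eq_right.mpr (μ.supp T hT).subset_edgeFinset, eq_sub_iff_add_eq]
    exact_mod_cast (μ.supp T hT).card_add_one
  rw [μ.sum_edgeProbOn]
  exact le_antisymm (expect_le fun T hT => (hcard T hT).le) (le_expect fun T hT => (hcard T hT).ge)

lemma IsFairOn.sum_sq_le (hμ : IsFairOn μ) (ν : TreePMFOn G univ) :
    ∑ e ∈ G.edgeFinset, edgeProbOn μ e ^ 2 ≤ ∑ e ∈ G.edgeFinset, edgeProbOn ν e ^ 2 := by
  have h := hμ ν
  rw [edgeVarOn, edgeVarOn, inducedEdges_univ, μ.sum_edgeProbOn_edgeFinset,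
    ν.sum_edgeProbOn_edgeFinset, sub_le_sub_iff_right] at h
  rcases (#G.edgeFinset).eq_zero_or_pos with h0 | h0
  · simp [card_eq_zero.mp h0]
  · exact (div_le_div_iff_of_pos_right (by exact_mod_cast h0)).mp h

lemma IsFairOn.sum_sq_le_sum_edgeProbOn (hμ : IsFairOn μ) {T₀ : Finset (Sym2 V)}
    (hT₀ : IsSpanningTreeOn G univ T₀) :
    ∑ e ∈ G.edgeFinset, edgeProbOn μ e ^ 2 ≤ ∑ e ∈ T₀, edgeProbOn μ e := by
  set η := edgeProbOn μ
  set i : Sym2 V → ℝ := fun e => if e ∈ T₀ then 1 else 0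
  have hW : ∑ e ∈ T₀, η e = ∑ e ∈ G.edgeFinset, i e * η e := by
    simp [i, ite_mul, sum_ite_mem, inter_eq_right.mpr hT₀.subset_edgeFinset]
  rw [hW, ← sub_nonneg]
  refine (mul_nonneg_iff_of_pos_left two_pos).mp (nonneg_of_forall_mul_add_sq_nonneg
    (b := ∑ e ∈ G.edgeFinset, (i e - η e) ^ 2) fun t ht₀ ht₁ => ?_)
  have hν := hμ.sum_sq_le (μ.mixDirac hT₀ ht₀.le ht₁)
  have hexp : ∀ e, edgeProbOn (μ.mixDirac hT₀ ht₀.le ht₁) e ^ 2 =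
      η e ^ 2 + t * (2 * (i e * η e - η e ^ 2)) + t ^ 2 * (i e - η e) ^ 2 := by
    intro e
    rw [TreePMFOn.edgeProbOn_mixDirac]
    by_cases he : e ∈ T₀ <;> simp only [i, he, if_true, if_false] <;> ring
  simp only [hexp, sum_add_distrib, ← mul_sum, sum_sub_distrib] at hν
  linarith

lemma IsFairOn.sum_edgeProbOn_eq_of_ne_zero (hμ : IsFairOn μ) {T : Finset (Sym2 V)}
    (hT : μ.toFun T ≠ 0) :
    ∑ e ∈ T, edgeProbOn μ e = ∑ e ∈ G.edgeFinset, edgeProbOn μ e ^ 2 := by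
  have hinter : ∀ T, μ.toFun T ≠ 0 → G.edgeFinset ∩ T = T := fun T hT =>
    inter_eq_right.mpr (μ.supp T hT).subset_edgeFinset
  have := TreePMFOn.eq_of_expect_le (φ := fun T => ∑ e ∈ G.edgeFinset ∩ T, edgeProbOn μ e)
    (fun T hT => hinter T hT ▸ hμ.sum_sq_le_sum_edgeProbOn (μ.supp T hT))
    (by simp only [sq]; exact (μ.sum_mul_edgeProbOn _ _).ge) hT
  rwa [hinter T hT] at this

lemma IsFairOn.isMinWeightSpanningTree (hμ : IsFairOn μ) {T : Finset (Sym2 V)}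
    (hT : μ.toFun T ≠ 0) : IsMinWeightSpanningTree G (edgeProbOn μ) T :=
  ⟨μ.supp T hT, fun _ hT' =>
    (hμ.sum_edgeProbOn_eq_of_ne_zero hT).trans_le (hμ.sum_sq_le_sum_edgeProbOn hT')⟩

end Fair

section Density

variable {G D : SimpleGraph V} {S : Finset V}

lemma two_le_card_of_inducedEdges_nonempty (h : (inducedEdges G S).Nonempty) : 2 ≤ #S := by
  obtain ⟨e, he⟩ := h
  induction e using Sym2.ind with
  | h x y =>
    obtain ⟨hxy, hS⟩ := mem_filter.mp he
    exact one_lt_card.mpr ⟨x, hS x (Sym2.mem_mk_left x y), y, hS y (Sym2.mem_mk_right x y),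
      G.ne_of_adj (mem_edgeFinset.mp hxy)⟩

lemma card_inducedEdges_eq_card_edgeFinset_induce (G : SimpleGraph V) (S : Finset V) :
    #(inducedEdges G S) = #(G.induce (S : Set V)).edgeFinset := by
  rw [← card_map (Function.Embedding.subtype _).sym2Map]
  convert congrArg card (map_edgeFinset_induce (G := G) (s := (S : Set V))).symm using 4
  ext e
  simp [inducedEdges, mem_sym2_iff]

lemma card_inducedEdges_add_one_of_isTree (h : (G.induce (S : Set V)).IsTree) :
    #(inducedEdges G S) + 1 = #S := by
  rw [card_inducedEdges_eq_card_edgeFinset_induce, h.card_edgeFinset]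
  simp

lemma SimpleGraph.IsAcyclic.card_inducedEdges_add_one_le (hG : G.IsAcyclic) (hS : S.Nonempty) :
    #(inducedEdges G S) + 1 ≤ #S := by
  obtain ⟨v, hv⟩ := hS
  have : Nonempty (S : Set V) := ⟨⟨v, hv⟩⟩
  rw [card_inducedEdges_eq_card_edgeFinset_induce]
  simpa using (hG.induce (S : Set V)).card_edgeFinset_add_one_le

lemma card_eq_sum_card_filter_supp {X : Finset (Sym2 V)}
    (hX : ∀ x y, s(x, y) ∈ X → D.Reachable x y) :
    #X = ∑ c : D.ConnectedComponent, #{e ∈ X | ∀ v ∈ e, v ∈ c.supp.toFinset} := by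
  have hX' : ∀ e ∈ X, ∀ u ∈ e, ∀ v ∈ e, D.Reachable u v := by
    intro e he u hu v hv
    induction e using Sym2.ind with
    | h x y =>
      rcases Sym2.mem_iff.mp hu with rfl | rfl <;> rcases Sym2.mem_iff.mp hv with rfl | rfl
      exacts [Reachable.refl _, hX _ _ he, (hX _ _ he).symm, Reachable.refl _]
  rw [card_eq_sum_card_fiberwise (f := fun e => D.connectedComponentMk e.out.1) (t := univ)
    fun _ _ => mem_coe.mpr (mem_univ _)]
  refine sum_congr rfl fun c _ => congrArg card (filter_congr fun e he => ?_)
  simp only [Set.mem_toFinset, ConnectedComponent.mem_supp_iff]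
  refine ⟨fun hc v hv => ?_, fun h => h _ e.out_fst_mem⟩
  rw [← hc, ConnectedComponent.eq]
  exact hX' e he v hv _ e.out_fst_mem

lemma card_inducedEdges_supp_le {θ : ℝ} (hmax : ∀ S, InH G S → density G S ≤ θ) (hθ : 0 ≤ θ)
    (hDG : D ≤ G) (hD : D.IsAcyclic) (c : D.ConnectedComponent) :
    (#(inducedEdges G c.supp.toFinset) : ℝ) ≤ θ * #(inducedEdges D c.supp.toFinset) := by
  have htree : #(inducedEdges D c.supp.toFinset) + 1 = #c.supp.toFinset := by
    refine card_inducedEdges_add_one_of_isTree ?_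
    rw [Set.coe_toFinset]
    exact hD.isTree_connectedComponent c
  rcases (inducedEdges G c.supp.toFinset).eq_empty_or_nonempty with hE | hE
  · rw [hE, card_empty, Nat.cast_zero]
    positivity
  have hconn : (G.induce (c.supp.toFinset : Set V)).Connected := by
    rw [Set.coe_toFinset]
    exact c.connected_toSimpleGraph.mono (G' := G.induce c.supp) fun _ _ h => hDG h
  have h2 : (2 : ℝ) ≤ #c.supp.toFinset := by
    exact_mod_cast two_le_card_of_inducedEdges_nonempty hE
  have hdens := hmax _ ⟨hE, hconn⟩
  rw [density, div_le_iff₀ (by linarith)] at hdens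
  have hcard : (#(inducedEdges D c.supp.toFinset) : ℝ) = #c.supp.toFinset - 1 := by
    rw [eq_sub_iff_add_eq]
    exact_mod_cast htree
  rwa [hcard]

lemma card_le_mul_card_edgeFinset_of_reachable {θ : ℝ} (hmax : ∀ S, InH G S → density G S ≤ θ)
    (hθ : 0 ≤ θ) (hDG : D ≤ G) (hD : D.IsAcyclic) {L : Finset (Sym2 V)} (hL : L ⊆ G.edgeFinset)
    (hreach : ∀ x y, s(x, y) ∈ L → D.Reachable x y) :
    (#L : ℝ) ≤ θ * #D.edgeFinset := by
  rw [card_eq_sum_card_filter_supp hreach,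
    card_eq_sum_card_filter_supp fun x y h => Adj.reachable (mem_edgeFinset.mp h),
    Nat.cast_sum, Nat.cast_sum, mul_sum]
  refine sum_le_sum fun c _ => le_trans ?_ (card_inducedEdges_supp_le hmax hθ hDG hD c)
  exact Nat.cast_le.mpr (card_le_card fun e he =>
    mem_filter.mpr ⟨hL (mem_filter.mp he).1, (mem_filter.mp he).2⟩)

end Density

lemma IsFairOn.inv_le_edgeProbOn [Nonempty V] {G : SimpleGraph V} {μ : TreePMFOn G univ}
    (hμ : IsFairOn μ) {θ : ℝ} (hmax : ∀ S, InH G S → density G S ≤ θ) (hθ : 0 < θ) {e : Sym2 V}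
    (he : e ∈ G.edgeFinset) : θ⁻¹ ≤ edgeProbOn μ e := by
  obtain ⟨e₀, he₀, hmin⟩ := G.edgeFinset.exists_min_image (edgeProbOn μ) ⟨e, he⟩
  set t := edgeProbOn μ e₀
  set L := {e ∈ G.edgeFinset | edgeProbOn μ e = t}
  have hLT : ∀ T, μ.toFun T ≠ 0 → (#L : ℝ) / θ ≤ #(L ∩ T) := by
    intro T hT
    obtain ⟨hTG, -, hTacyc, -⟩ := μ.supp T hT
    have hsub : ((L ∩ T : Finset (Sym2 V)) : Set (Sym2 V)) ⊆ T := coe_subset.mpr inter_subset_right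
    have hforest := card_le_mul_card_edgeFinset_of_reachable hmax hθ.le
      (fun _ _ h => hTG (hsub ((fromEdgeSet_adj _).mp h).1)) (hTacyc.anti (fromEdgeSet_mono hsub))
      (filter_subset _ _) fun x y hxy =>
        (hμ.isMinWeightSpanningTree hT).reachable_of_mem_filter_eq hmin hxy
    rw [div_le_iff₀' hθ]
    refine hforest.trans
      (mul_le_mul_of_nonneg_left (Nat.cast_le.mpr (card_le_card fun f hf => ?_)) hθ.le)
    simp only [mem_edgeFinset, edgeSet_fromEdgeSet, Set.mem_sdiff, mem_coe] at hf
    exact hf.1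
  have hsum : ∑ e ∈ L, edgeProbOn μ e = t * #L := by
    rw [sum_congr rfl fun e he => (mem_filter.mp he).2, sum_const, nsmul_eq_mul, mul_comm]
  have he₀L : e₀ ∈ L := mem_filter.mpr ⟨he₀, rfl⟩
  have hL : (0 : ℝ) < #L := by exact_mod_cast card_pos.mpr ⟨e₀, he₀L⟩
  have hexp : (#L : ℝ) / θ ≤ t * #L := hsum ▸ μ.sum_edgeProbOn L ▸ TreePMFOn.le_expect hLT
  calc θ⁻¹ ≤ t := le_of_mul_le_mul_right (by rwa [← div_eq_inv_mul]) hL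
    _ ≤ edgeProbOn μ e := hmin e he

lemma TreePMFOn.sum_edgeProbOn_inducedEdges_le {G : SimpleGraph V} {S₀ S : Finset V}
    (μ : TreePMFOn G S₀) (hS : S.Nonempty) :
    ∑ e ∈ inducedEdges G S, edgeProbOn μ e ≤ #S - 1 := by
  rw [μ.sum_edgeProbOn]
  refine TreePMFOn.expect_le fun T hT => ?_
  have hsub : inducedEdges G S ∩ T ⊆ inducedEdges (fromEdgeSet (T : Set (Sym2 V))) S := by
    intro e he
    obtain ⟨he₁, he₂⟩ := mem_inter.mp he
    refine mem_filter.mpr ⟨?_, (mem_filter.mp he₁).2⟩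
    simp only [mem_edgeFinset, edgeSet_fromEdgeSet]
    exact ⟨he₂, not_isDiag_of_mem_edgeSet _ (mem_edgeFinset.mp (mem_filter.mp he₁).1)⟩
  have := (μ.supp T hT).2.2.1.card_inducedEdges_add_one_le hS
  have := card_le_card hsub
  rw [le_sub_iff_add_le]
  exact_mod_cast (by omega : #(inducedEdges G S ∩ T) + 1 ≤ #S)

theorem edgeProb_eq_inv_density_of_minimalDensest_general
    {V : Type*} [Fintype V] [DecidableEq V] (G : SimpleGraph V)
    (S : Finset V) (hmin : IsMinimalDensest G S) :
    ∀ μ : TreePMFOn G Finset.univ, IsFairOn μ →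
      ∀ e ∈ inducedEdges G S,
        edgeProbOn μ e = ((S.card : ℝ) - 1) / ((inducedEdges G S).card : ℝ) ∧
        edgeProbOn μ e = (density G S)⁻¹ := by
  intro μ hμ e he
  obtain ⟨⟨⟨hE, -⟩, hmax⟩, -⟩ := hmin
  have hS := two_le_card_of_inducedEdges_nonempty hE
  obtain ⟨v, hv⟩ := card_pos.mp (by omega : 0 < #S)
  have : Nonempty V := ⟨v⟩
  have hE' : (0 : ℝ) < #(inducedEdges G S) := by exact_mod_cast card_pos.mpr hE
  have hθ : 0 < density G S := div_pos hE' (sub_pos.mpr (by exact_mod_cast hS))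
  have hinv : (density G S)⁻¹ = (#S - 1) / #(inducedEdges G S) := inv_div _ _
  have hlow : ∀ e ∈ inducedEdges G S, (density G S)⁻¹ ≤ edgeProbOn μ e :=
    fun e he => hμ.inv_le_edgeProbOn hmax hθ (filter_subset _ _ he)
  have hup : ∑ e ∈ inducedEdges G S, edgeProbOn μ e ≤ ∑ _e ∈ inducedEdges G S, (density G S)⁻¹ := by
    rw [sum_const, nsmul_eq_mul, hinv, mul_div_cancel₀ _ hE'.ne']
    exact μ.sum_edgeProbOn_inducedEdges_le ⟨v, hv⟩
  have := ((sum_eq_sum_iff_of_le hlow).mp (le_antisymm (sum_le_sum hlow) hup) e he).symm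
  exact ⟨hinv ▸ this, this⟩

/-- If `H₀` (induced on `S`) is a minimal 1-densest subgraph of the finite
connected simple graph `G` with `H₀ ≠ G`, then for every fair pmf `μ*` on the spanning
trees of `G` and every edge `e` of `H₀`, the edge probability is
`η_{μ*}(e) = (|V(H₀)|-1)/|E(H₀)| = θ(H₀)⁻¹`. -/
theorem edgeProb_eq_inv_density_of_minimalDensest
    {V : Type*} [Fintype V] [DecidableEq V] (G : SimpleGraph V) (hG : G.Connected)
    (S : Finset V) (hmin : IsMinimalDensest G S) (hne : S ≠ Finset.univ) :
    ∀ μ : TreePMFOn G Finset.univ, IsFairOn μ →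
      ∀ e ∈ inducedEdges G S,
        edgeProbOn μ e = ((S.card : ℝ) - 1) / ((inducedEdges G S).card : ℝ) ∧
        edgeProbOn μ e = (density G S)⁻¹ :=
  edgeProb_eq_inv_density_of_minimalDensest_general G S hmin
end
end

section
/- For all integers m,n ≥ 1, let T be an edge set of the grid graph L on {0,…,m}×{0,…,n} that is a spanning tree of L, contains all boundary edges B, and does not belong to Γ̄. Then there exist interior vertices v* and v_* such that |T ∩ E_{v*}| = 2 and |T ∩ E_{v_*}| = 0. -/
/-!
The grid edges off `B` are partitioned by the pairs `E_v`, `v` interior. A spanning tree has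
`(m+1)(n+1) - 1 = mn + m + n` edges, `m + n` of which form `B`, so the `mn` counts
`|T ∩ E_v| ∈ {0, 1, 2}` sum to `mn`. If every count were `1`, `T` would be the member of `Γ̄`
choosing in each `E_v` the edge of `T`; so some count differs from the average `1`, and then
counts above and below the average both occur.
-/

open scoped Classical

noncomputable section

/-- Vertices of the grid on `{0,…,m} × {0,…,n}`. -/
abbrev GridV (m n : ℕ) := Fin (m + 1) × Fin (n + 1)

/-- The grid graph on `{0,…,m} × {0,…,n}`: two vertices are adjacent iff they differ by 1
in exactly one coordinate. -/
def gridL (m n : ℕ) : SimpleGraph (GridV m n) :=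
  SimpleGraph.fromRel fun v w =>
    (v.1 = w.1 ∧ v.2.val + 1 = w.2.val) ∨ (v.2 = w.2 ∧ v.1.val + 1 = w.1.val)

/-- The set `B` of boundary edges: the bottom-row edges together with the
right-column edges. -/
def boundaryB (m n : ℕ) : Finset (Sym2 (GridV m n)) :=
  ((Finset.univ : Finset (Fin m)).image fun i =>
      s(((i.castSucc : Fin (m + 1)), (0 : Fin (n + 1))),
        ((i.succ : Fin (m + 1)), (0 : Fin (n + 1))))) ∪
    ((Finset.univ : Finset (Fin n)).image fun j =>
      s((Fin.last m, (j.castSucc : Fin (n + 1))),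
        (Fin.last m, (j.succ : Fin (n + 1)))))

/-- A vertex `v = (i, j)` is interior if `j ≥ 1` and `i ≤ m - 1`. -/
def Interior (m n : ℕ) (v : GridV m n) : Prop := v.1.val < m ∧ 1 ≤ v.2.val

/-- The finset of interior vertices. -/
def interiorFinset (m n : ℕ) : Finset (GridV m n) :=
  Finset.univ.filter fun v : GridV m n => v.1.val < m ∧ 1 ≤ v.2.val

/-- The edge to the right of `v` (for interior `v`, i.e. when `v.1 < m`). -/
def rightEdge (m n : ℕ) (v : GridV m n) : Sym2 (GridV m n) :=
  s(v, ((⟨min (v.1.val + 1) m, by omega⟩ : Fin (m + 1)), v.2))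

/-- The edge below `v` (for interior `v`, i.e. when `v.2 ≥ 1`). -/
def belowEdge (m n : ℕ) (v : GridV m n) : Sym2 (GridV m n) :=
  s(v, (v.1, (⟨v.2.val - 1, lt_of_le_of_lt (Nat.sub_le _ _) v.2.isLt⟩ : Fin (n + 1))))

/-- The pair `E_v` of candidate edges at an interior vertex `v`: the edge to the right of
`v` and the edge below `v`. -/
def Ev (m n : ℕ) (v : GridV m n) : Finset (Sym2 (GridV m n)) :=
  {rightEdge m n v, belowEdge m n v}

/-- The edge set `B ∪ {f(v) : v interior}` determined by a choice function `f`
(`f v = true` chooses the edge to the right of `v`, `f v = false` the edge below `v`). -/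
def treeOf (m n : ℕ) (f : GridV m n → Bool) : Finset (Sym2 (GridV m n)) :=
  boundaryB m n ∪
    (interiorFinset m n).image fun v => if f v then rightEdge m n v else belowEdge m n v

/-- The collection `Γ̄` of all edge sets `B ∪ {f(v) : v interior}`. -/
def GammaBar (m n : ℕ) : Finset (Finset (Sym2 (GridV m n))) :=
  (Finset.univ : Finset (GridV m n → Bool)).image (treeOf m n)

theorem Finset.exists_gt_and_exists_lt_of_sum_eq_card_nsmul {ι M : Type*} [AddCommMonoid M]
    [LinearOrder M] [IsOrderedCancelAddMonoid M] {s : Finset ι} {f : ι → M} {c : M}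
    (hsum : ∑ i ∈ s, f i = s.card • c) {i₀ : ι} (hi₀ : i₀ ∈ s) (hne : f i₀ ≠ c) :
    (∃ i ∈ s, c < f i) ∧ ∃ i ∈ s, f i < c := by
  rw [← Finset.sum_const] at hsum
  constructor
  · by_contra! hle
    exact (Finset.sum_lt_sum hle ⟨i₀, hi₀, lt_of_le_of_ne (hle i₀ hi₀) hne⟩).ne hsum
  · by_contra! hge
    exact (Finset.sum_lt_sum hge ⟨i₀, hi₀, lt_of_le_of_ne (hge i₀ hi₀) hne.symm⟩).ne' hsum

theorem SimpleGraph.IsTree.card_add_one_of_subset_edgeSet {V : Type*} [Fintype V]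
    {G : SimpleGraph V} {T : Finset (Sym2 V)} (hTG : (↑T : Set (Sym2 V)) ⊆ G.edgeSet)
    (htree : (SimpleGraph.fromEdgeSet (↑T : Set (Sym2 V))).IsTree) :
    T.card + 1 = Fintype.card V := by
  have hedges : (SimpleGraph.fromEdgeSet (↑T : Set (Sym2 V))).edgeFinset = T := by
    ext e
    simp only [SimpleGraph.mem_edgeFinset, SimpleGraph.edgeSet_fromEdgeSet, Set.mem_sdiff,
      Finset.mem_coe, Sym2.mem_diagSet, and_iff_left_iff_imp]
    exact fun he => G.not_isDiag_of_mem_edgeSet (hTG he)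
  rw [← hedges]
  exact htree.card_edgeFinset

section Grid

variable {m n : ℕ}

theorem mem_boundaryB {e : Sym2 (GridV m n)} :
    e ∈ boundaryB m n ↔
      (∃ i : Fin m, e = s((i.castSucc, 0), (i.succ, 0))) ∨
      ∃ j : Fin n, e = s((Fin.last m, j.castSucc), (Fin.last m, j.succ)) := by
  simp [boundaryB, eq_comm]

theorem mem_interiorFinset {v : GridV m n} : v ∈ interiorFinset m n ↔ Interior m n v := by
  simp [interiorFinset, Interior]

theorem mem_Ev {v : GridV m n} {e : Sym2 (GridV m n)} :
    e ∈ Ev m n v ↔ e = rightEdge m n v ∨ e = belowEdge m n v := by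
  simp [Ev]

theorem card_boundaryB : (boundaryB m n).card = m + n := by
  rw [boundaryB, Finset.card_union_of_disjoint, Finset.card_image_of_injective,
    Finset.card_image_of_injective, Finset.card_univ, Finset.card_univ,
    Fintype.card_fin, Fintype.card_fin]
  · intro j j' h
    simp only [Sym2.eq_iff, Prod.ext_iff, Fin.ext_iff, Fin.val_castSucc, Fin.val_succ] at h
    exact Fin.ext (by omega)
  · intro i i' h
    simp only [Sym2.eq_iff, Prod.ext_iff, Fin.ext_iff, Fin.val_castSucc, Fin.val_succ] at h
    exact Fin.ext (by omega)
  · rw [Finset.disjoint_left]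
    simp only [Finset.mem_image, Finset.mem_univ, true_and, not_exists, forall_exists_index,
      forall_apply_eq_imp_iff]
    intro i j h
    simp only [Sym2.eq_iff, Prod.ext_iff, Fin.ext_iff, Fin.val_castSucc, Fin.val_succ,
      Fin.val_zero, Fin.val_last] at h
    omega

theorem card_interiorFinset : (interiorFinset m n).card = m * n := by
  have hprod : interiorFinset m n =
      (Finset.univ.erase (Fin.last m)) ×ˢ (Finset.univ.erase (0 : Fin (n + 1))) := by
    ext ⟨i, j⟩
    simp only [interiorFinset, Finset.mem_filter, Finset.mem_univ, true_and, Finset.mem_product,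
      Finset.mem_erase, ne_eq, and_true, Fin.ext_iff, Fin.val_last, Fin.val_zero]
    omega
  simp [hprod]

theorem rightEdge_ne_belowEdge {v : GridV m n} (hv : Interior m n v) :
    rightEdge m n v ≠ belowEdge m n v := by
  obtain ⟨h1, h2⟩ := hv
  simp only [rightEdge, belowEdge, ne_eq, Sym2.eq_iff, Prod.ext_iff, Fin.ext_iff]
  omega

theorem card_Ev {v : GridV m n} (hv : Interior m n v) : (Ev m n v).card = 2 :=
  Finset.card_pair (rightEdge_ne_belowEdge hv)

theorem disjoint_boundaryB_Ev {v : GridV m n} (hv : Interior m n v) :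
    Disjoint (boundaryB m n) (Ev m n v) := by
  obtain ⟨h1, h2⟩ := hv
  rw [Finset.disjoint_left]
  intro e hB hE
  rcases mem_Ev.1 hE with rfl | rfl <;> rcases mem_boundaryB.1 hB with ⟨i, h⟩ | ⟨j, h⟩ <;>
    simp only [rightEdge, belowEdge, Sym2.eq_iff, Prod.ext_iff, Fin.ext_iff, Fin.val_castSucc,
      Fin.val_succ, Fin.val_last, Fin.val_zero] at h <;> omega

theorem pairwiseDisjoint_Ev :
    (↑(interiorFinset m n) : Set (GridV m n)).PairwiseDisjoint (Ev m n) := by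
  intro v hv w hw hvw
  rw [Finset.mem_coe, mem_interiorFinset] at hv hw
  rw [Function.onFun, Finset.disjoint_left]
  intro e hev hew
  apply hvw
  rcases mem_Ev.1 hev with rfl | rfl <;> rcases mem_Ev.1 hew with h | h <;>
    simp only [rightEdge, belowEdge, Sym2.eq_iff, Prod.ext_iff, Fin.ext_iff] at h <;>
    exact Prod.ext (Fin.ext (by omega)) (Fin.ext (by omega))

theorem exists_mem_Ev_of_step {a b : GridV m n}
    (hab : (a.1 = b.1 ∧ a.2.val + 1 = b.2.val) ∨ (a.2 = b.2 ∧ a.1.val + 1 = b.1.val))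
    (hB : s(a, b) ∉ boundaryB m n) : ∃ v, Interior m n v ∧ s(a, b) ∈ Ev m n v := by
  rcases hab with ⟨h1, h2⟩ | ⟨h1, h2⟩ <;> replace h1 := congrArg Fin.val h1
  · by_cases hlast : a.1.val = m
    · refine absurd (mem_boundaryB.2 (Or.inr ⟨⟨a.2.val, by omega⟩, ?_⟩)) hB
      simp only [and_true, Sym2.eq_iff, Prod.ext_iff, Fin.ext_iff, Fin.val_castSucc, Fin.val_succ,
        Fin.val_last]
      omega
    · refine ⟨b, ⟨by omega, by omega⟩, mem_Ev.2 (Or.inr ?_)⟩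
      simp only [and_true, true_and, belowEdge, Sym2.eq_iff, Prod.ext_iff, Fin.ext_iff]
      omega
  · by_cases hbottom : a.2.val = 0
    · refine absurd (mem_boundaryB.2 (Or.inl ⟨⟨a.1.val, by omega⟩, ?_⟩)) hB
      simp only [true_and, Sym2.eq_iff, Prod.ext_iff, Fin.ext_iff, Fin.val_castSucc, Fin.val_succ,
        Fin.val_zero]
      omega
    · refine ⟨a, ⟨by omega, by omega⟩, mem_Ev.2 (Or.inl ?_)⟩
      simp only [and_true, true_and, rightEdge, Sym2.eq_iff, Prod.ext_iff, Fin.ext_iff]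
      omega

theorem exists_mem_Ev_of_mem_edgeSet {e : Sym2 (GridV m n)} (he : e ∈ (gridL m n).edgeSet)
    (hB : e ∉ boundaryB m n) : ∃ v, Interior m n v ∧ e ∈ Ev m n v := by
  induction e using Sym2.ind with
  | _ a b =>
    rw [SimpleGraph.mem_edgeSet, gridL, SimpleGraph.fromRel_adj] at he
    rcases he.2 with hab | hba
    · exact exists_mem_Ev_of_step hab hB
    · rw [Sym2.eq_swap] at hB ⊢
      exact exists_mem_Ev_of_step hba hB

section Tree

variable {T : Finset (Sym2 (GridV m n))}

theorem sdiff_boundaryB_eq_biUnion (hT : (↑T : Set (Sym2 (GridV m n))) ⊆ (gridL m n).edgeSet) :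
    T \ boundaryB m n = (interiorFinset m n).biUnion fun v => T ∩ Ev m n v := by
  ext e
  simp only [Finset.mem_sdiff, Finset.mem_biUnion, Finset.mem_inter, mem_interiorFinset]
  constructor
  · rintro ⟨heT, heB⟩
    obtain ⟨v, hv, he⟩ := exists_mem_Ev_of_mem_edgeSet (hT heT) heB
    exact ⟨v, hv, heT, he⟩
  · rintro ⟨v, hv, heT, he⟩
    exact ⟨heT, Finset.disjoint_right.1 (disjoint_boundaryB_Ev hv) he⟩

theorem sum_card_inter_Ev (hT : (↑T : Set (Sym2 (GridV m n))) ⊆ (gridL m n).edgeSet)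
    (htree : (SimpleGraph.fromEdgeSet (↑T : Set (Sym2 (GridV m n)))).IsTree)
    (hB : boundaryB m n ⊆ T) :
    ∑ v ∈ interiorFinset m n, (T ∩ Ev m n v).card = m * n := by
  have hcard : T.card + 1 = (m + 1) * (n + 1) := by
    simpa using htree.card_add_one_of_subset_edgeSet hT
  have hdisj : (↑(interiorFinset m n) : Set (GridV m n)).PairwiseDisjoint
      fun v => T ∩ Ev m n v :=
    pairwiseDisjoint_Ev.mono fun _ => Finset.inter_subset_right
  rw [← Finset.card_biUnion hdisj, ← sdiff_boundaryB_eq_biUnion hT,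
    Finset.card_sdiff_of_subset hB, card_boundaryB]
  grind

theorem inter_Ev_eq_singleton {v : GridV m n} (h1 : (T ∩ Ev m n v).card = 1) :
    T ∩ Ev m n v = {if rightEdge m n v ∈ T then rightEdge m n v else belowEdge m n v} := by
  obtain ⟨e, he⟩ := Finset.card_eq_one.1 h1
  have hmem : ∀ e', e' ∈ T ∧ e' ∈ Ev m n v ↔ e' = e := by
    simpa [Finset.ext_iff] using he
  rw [he, Finset.singleton_inj]
  split_ifs with hr
  · exact ((hmem _).1 ⟨hr, mem_Ev.2 (Or.inl rfl)⟩).symm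
  · have heT := ((hmem e).2 rfl)
    rcases mem_Ev.1 heT.2 with rfl | rfl
    · exact absurd heT.1 hr
    · rfl

theorem mem_gammaBar_of_card_inter_Ev_eq_one
    (hT : (↑T : Set (Sym2 (GridV m n))) ⊆ (gridL m n).edgeSet) (hB : boundaryB m n ⊆ T)
    (h1 : ∀ v ∈ interiorFinset m n, (T ∩ Ev m n v).card = 1) : T ∈ GammaBar m n := by
  refine Finset.mem_image.2 ⟨fun v => decide (rightEdge m n v ∈ T), Finset.mem_univ _, ?_⟩
  have hchoice : ((interiorFinset m n).image fun v =>
      if decide (rightEdge m n v ∈ T) then rightEdge m n v else belowEdge m n v) =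
      T \ boundaryB m n := by
    rw [sdiff_boundaryB_eq_biUnion hT, ← Finset.biUnion_singleton]
    refine Finset.biUnion_congr rfl fun v hv => ?_
    simp only [inter_Ev_eq_singleton (h1 v hv), decide_eq_true_eq]
  rw [treeOf, hchoice, Finset.union_sdiff_of_subset hB]

end Tree

end Grid

theorem exists_double_and_empty_of_not_gammaBar_general (m n : ℕ)
    (T : Finset (Sym2 (GridV m n)))
    (hsub : (↑T : Set (Sym2 (GridV m n))) ⊆ (gridL m n).edgeSet)
    (hconn : (SimpleGraph.fromEdgeSet (↑T : Set (Sym2 (GridV m n)))).Connected)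
    (hacyc : (SimpleGraph.fromEdgeSet (↑T : Set (Sym2 (GridV m n)))).IsAcyclic)
    (hB : boundaryB m n ⊆ T) (hnot : T ∉ GammaBar m n) :
    ∃ v w : GridV m n, Interior m n v ∧ Interior m n w ∧
      (T ∩ Ev m n v).card = 2 ∧ (T ∩ Ev m n w).card = 0 := by
  have hsum : ∑ v ∈ interiorFinset m n, (T ∩ Ev m n v).card =
      (interiorFinset m n).card • 1 := by
    rw [sum_card_inter_Ev hsub ⟨hconn, hacyc⟩ hB, card_interiorFinset, smul_eq_mul, mul_one]
  obtain ⟨v₀, hv₀, hne⟩ : ∃ v ∈ interiorFinset m n, (T ∩ Ev m n v).card ≠ 1 := by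
    by_contra! h1
    exact hnot (mem_gammaBar_of_card_inter_Ev_eq_one hsub hB h1)
  obtain ⟨⟨v, hv, hv2⟩, ⟨w, hw, hw0⟩⟩ :=
    Finset.exists_gt_and_exists_lt_of_sum_eq_card_nsmul hsum hv₀ hne
  rw [mem_interiorFinset] at hv hw
  have hv_le : (T ∩ Ev m n v).card ≤ 2 :=
    (Finset.card_le_card Finset.inter_subset_right).trans (card_Ev hv).le
  exact ⟨v, w, hv, hw, by omega, by omega⟩

/-- if `T` is a spanning tree of the grid graph `L` that contains all
boundary edges but does not belong to `Γ̄`, then there are interior vertices `v*` and `v_*`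
with `|T ∩ E_{v*}| = 2` and `|T ∩ E_{v_*}| = 0`. -/
theorem exists_double_and_empty_of_not_gammaBar (m n : ℕ) (hm : 1 ≤ m) (hn : 1 ≤ n)
    (T : Finset (Sym2 (GridV m n)))
    (hsub : (↑T : Set (Sym2 (GridV m n))) ⊆ (gridL m n).edgeSet)
    (hconn : (SimpleGraph.fromEdgeSet (↑T : Set (Sym2 (GridV m n)))).Connected)
    (hacyc : (SimpleGraph.fromEdgeSet (↑T : Set (Sym2 (GridV m n)))).IsAcyclic)
    (hB : boundaryB m n ⊆ T) (hnot : T ∉ GammaBar m n) :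
    ∃ v w : GridV m n, Interior m n v ∧ Interior m n w ∧
      (T ∩ Ev m n v).card = 2 ∧ (T ∩ Ev m n w).card = 0 :=
  exists_double_and_empty_of_not_gammaBar_general m n T hsub hconn hacyc hB hnot
end
end
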